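/- arXiv:math/9807010 — 2 statements merged into one kernel-verified Lean document; each statement's English description precedes it below -/
import Mathlib

section
/- For odd n ≥ 3, the alternating sum over k from 0 to n-3 of (-1)^(n-3-k) * ((n-1)!/2^(k+1)) * (1/(k+1)) * C(n-3,k) * C(n-1+k,k) equals (-1)^((n-3)/2) * (n-2) * ((n-4)!!)^2. -/
open Finset

/-- Summand of the Euler-characteristic sum, with the global sign `(-1)^m` removed. -/
def Fq (m k : ℕ) : ℚ :=
  (-1) ^ k * (Nat.choose m k : ℚ) * (Nat.choose (m + 2 + k) k : ℚ) / (((k : ℚ) + 1) * 2 ^ (k + 1))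

/-- WZ-style certificate for the recurrence `(m+4) A(m+2) + (m+1) A(m) = 0`. -/
def Gq (m k : ℕ) : ℚ :=
  (-1) ^ (k + 1) * (2 * (m : ℚ) + 5) * (k : ℚ) * (Nat.choose (m + 2) k : ℚ) *
    (Nat.choose (m + 2 + k) k : ℚ) / (((m : ℚ) + 2) * ((m : ℚ) + 3) * 2 ^ k)

lemma step (m k : ℕ) :
    ((m : ℚ) + 4) * Fq (m + 2) k + ((m : ℚ) + 1) * Fq m k = Gq m (k + 1) - Gq m k := by
  rcases Nat.lt_or_ge (m + 2) k with hk | hk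
  · have h1 : Nat.choose m k = 0 := Nat.choose_eq_zero_of_lt (by omega)
    have h2 : Nat.choose (m + 2) k = 0 := Nat.choose_eq_zero_of_lt (by omega)
    have h3 : Nat.choose (m + 2) (k + 1) = 0 := Nat.choose_eq_zero_of_lt (by omega)
    simp [Fq, Gq, h1, h2, h3]
  rcases Nat.lt_or_ge m k with hk' | hk'
  · -- k = m+1 or k = m+2
    rcases (by omega : k = m + 1 ∨ k = m + 2) with rfl | rfl
    · -- k = m + 1
      have f1 : (2 * m + 4) * Nat.choose (2 * m + 3) (m + 1)
          = Nat.choose (2 * m + 4) (m + 2) * (m + 2) :=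
        Nat.add_one_mul_choose_eq (2 * m + 3) (m + 1)
      have f2 : Nat.choose (2 * m + 3) (m + 1) * (2 * m + 4)
          = Nat.choose (2 * m + 4) (m + 1) * (m + 3) := by
        simpa [show 2 * m + 3 + 1 - (m + 1) = m + 3 by omega]
          using Nat.choose_mul_succ_eq (2 * m + 3) (m + 1)
      have f3 : Nat.choose (2 * m + 4) (m + 1) * (2 * m + 5)
          = Nat.choose (2 * m + 5) (m + 1) * (m + 4) := by
        simpa [show 2 * m + 4 + 1 - (m + 1) = m + 4 by omega]
          using Nat.choose_mul_succ_eq (2 * m + 4) (m + 1)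
      have q1 : (2 * (m : ℚ) + 4) * (Nat.choose (2 * m + 3) (m + 1) : ℚ)
          = (Nat.choose (2 * m + 4) (m + 2) : ℚ) * ((m : ℚ) + 2) := by exact_mod_cast f1
      have q2 : (Nat.choose (2 * m + 3) (m + 1) : ℚ) * (2 * (m : ℚ) + 4)
          = (Nat.choose (2 * m + 4) (m + 1) : ℚ) * ((m : ℚ) + 3) := by exact_mod_cast f2
      have q3 : (Nat.choose (2 * m + 4) (m + 1) : ℚ) * (2 * (m : ℚ) + 5)
          = (Nat.choose (2 * m + 5) (m + 1) : ℚ) * ((m : ℚ) + 4) := by exact_mod_cast f3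
      have cA : (Nat.choose (2 * m + 4) (m + 2) : ℚ)
          = (Nat.choose (2 * m + 3) (m + 1) : ℚ) * (2 * (m : ℚ) + 4) / ((m : ℚ) + 2) := by
        rw [eq_div_iff (by positivity)]; linear_combination -q1
      have cB : (Nat.choose (2 * m + 5) (m + 1) : ℚ)
          = (Nat.choose (2 * m + 3) (m + 1) : ℚ) * ((2 * (m : ℚ) + 4) * (2 * (m : ℚ) + 5))
              / (((m : ℚ) + 3) * ((m : ℚ) + 4)) := by
        rw [eq_div_iff (by positivity)]
        linear_combination (-(2 * (m : ℚ) + 5)) * q2 + (-((m : ℚ) + 3)) * q3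
      have hz : Nat.choose m (m + 1) = 0 := Nat.choose_eq_zero_of_lt (by omega)
      have hs : Nat.choose (m + 2) (m + 1) = m + 2 := Nat.choose_succ_self_right (m + 1)
      have ht : Nat.choose (m + 2) (m + 2) = 1 := Nat.choose_self (m + 2)
      simp only [Fq, Gq, hz,
        show m + 2 + 2 + (m + 1) = 2 * m + 5 from by ring,
        show m + 2 + (m + 1) = 2 * m + 3 from by ring,
        show m + 1 + 1 = m + 2 from by ring,
        show m + 2 + (m + 2) = 2 * m + 4 from by ring, hs, ht]
      rw [cA, cB]
      push_cast
      field_simp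
      ring
    · -- k = m + 2
      have f4 : Nat.choose (2 * m + 4) (m + 2) * (2 * m + 5)
          = Nat.choose (2 * m + 5) (m + 2) * (m + 3) := by
        simpa [show 2 * m + 4 + 1 - (m + 2) = m + 3 by omega]
          using Nat.choose_mul_succ_eq (2 * m + 4) (m + 2)
      have f5 : Nat.choose (2 * m + 5) (m + 2) * (2 * m + 6)
          = Nat.choose (2 * m + 6) (m + 2) * (m + 4) := by
        simpa [show 2 * m + 5 + 1 - (m + 2) = m + 4 by omega]
          using Nat.choose_mul_succ_eq (2 * m + 5) (m + 2)
      have q4 : (Nat.choose (2 * m + 4) (m + 2) : ℚ) * (2 * (m : ℚ) + 5)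
          = (Nat.choose (2 * m + 5) (m + 2) : ℚ) * ((m : ℚ) + 3) := by exact_mod_cast f4
      have q5 : (Nat.choose (2 * m + 5) (m + 2) : ℚ) * (2 * (m : ℚ) + 6)
          = (Nat.choose (2 * m + 6) (m + 2) : ℚ) * ((m : ℚ) + 4) := by exact_mod_cast f5
      have cC : (Nat.choose (2 * m + 6) (m + 2) : ℚ)
          = (Nat.choose (2 * m + 4) (m + 2) : ℚ)
              * ((2 * (m : ℚ) + 5) * (2 * (m : ℚ) + 6)) / (((m : ℚ) + 3) * ((m : ℚ) + 4)) := by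
        rw [eq_div_iff (by positivity)]
        linear_combination (-(2 * (m : ℚ) + 6)) * q4 + (-((m : ℚ) + 3)) * q5
      have hz : Nat.choose m (m + 2) = 0 := Nat.choose_eq_zero_of_lt (by omega)
      have hz2 : Nat.choose (m + 2) (m + 3) = 0 := Nat.choose_eq_zero_of_lt (by omega)
      have ht : Nat.choose (m + 2) (m + 2) = 1 := Nat.choose_self (m + 2)
      simp only [Fq, Gq, hz,
        show m + 2 + 2 + (m + 2) = 2 * m + 6 from by ring,
        show m + 2 + (m + 2) = 2 * m + 4 from by ring,
        show m + 2 + 1 = m + 3 from by ring,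
        show m + 2 + (m + 3) = 2 * m + 5 from by ring, hz2, ht]
      rw [cC]
      push_cast
      field_simp
      ring
  · -- k ≤ m
    obtain ⟨d, rfl⟩ : ∃ d, m = k + d := ⟨m - k, by omega⟩
    have f1 : Nat.choose (k + d) k * (k + d + 1) = Nat.choose (k + d + 1) k * (d + 1) := by
      simpa [show k + d + 1 - k = d + 1 by omega] using Nat.choose_mul_succ_eq (k + d) k
    have f2 : Nat.choose (k + d + 1) k * (k + d + 2) = Nat.choose (k + d + 2) k * (d + 2) := by
      simpa [show k + d + 1 + 1 - k = d + 2 by omega] using Nat.choose_mul_succ_eq (k + d + 1) k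
    have f3 : (k + d + 2) * Nat.choose (k + d + 1) k = Nat.choose (k + d + 2) (k + 1) * (k + 1) :=
      Nat.add_one_mul_choose_eq (k + d + 1) k
    have f4 : Nat.choose (2 * k + d + 2) k * (2 * k + d + 3)
        = Nat.choose (2 * k + d + 3) k * (k + d + 3) := by
      simpa [show 2 * k + d + 2 + 1 - k = k + d + 3 by omega]
        using Nat.choose_mul_succ_eq (2 * k + d + 2) k
    have f5 : Nat.choose (2 * k + d + 3) k * (2 * k + d + 4)
        = Nat.choose (2 * k + d + 4) k * (k + d + 4) := by
      simpa [show 2 * k + d + 3 + 1 - k = k + d + 4 by omega]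
        using Nat.choose_mul_succ_eq (2 * k + d + 3) k
    have f6 : (2 * k + d + 3) * Nat.choose (2 * k + d + 2) k
        = Nat.choose (2 * k + d + 3) (k + 1) * (k + 1) :=
      Nat.add_one_mul_choose_eq (2 * k + d + 2) k
    have q1 : (Nat.choose (k + d) k : ℚ) * ((k : ℚ) + d + 1)
        = (Nat.choose (k + d + 1) k : ℚ) * ((d : ℚ) + 1) := by exact_mod_cast f1
    have q2 : (Nat.choose (k + d + 1) k : ℚ) * ((k : ℚ) + d + 2)
        = (Nat.choose (k + d + 2) k : ℚ) * ((d : ℚ) + 2) := by exact_mod_cast f2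
    have q3 : ((k : ℚ) + d + 2) * (Nat.choose (k + d + 1) k : ℚ)
        = (Nat.choose (k + d + 2) (k + 1) : ℚ) * ((k : ℚ) + 1) := by exact_mod_cast f3
    have q4 : (Nat.choose (2 * k + d + 2) k : ℚ) * (2 * (k : ℚ) + d + 3)
        = (Nat.choose (2 * k + d + 3) k : ℚ) * ((k : ℚ) + d + 3) := by exact_mod_cast f4
    have q5 : (Nat.choose (2 * k + d + 3) k : ℚ) * (2 * (k : ℚ) + d + 4)
        = (Nat.choose (2 * k + d + 4) k : ℚ) * ((k : ℚ) + d + 4) := by exact_mod_cast f5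
    have q6 : (2 * (k : ℚ) + d + 3) * (Nat.choose (2 * k + d + 2) k : ℚ)
        = (Nat.choose (2 * k + d + 3) (k + 1) : ℚ) * ((k : ℚ) + 1) := by exact_mod_cast f6
    have c2 : (Nat.choose (k + d + 2) k : ℚ)
        = (Nat.choose (k + d) k : ℚ) * (((k : ℚ) + d + 1) * ((k : ℚ) + d + 2))
            / (((d : ℚ) + 1) * ((d : ℚ) + 2)) := by
      rw [eq_div_iff (by positivity)]
      linear_combination (-((k : ℚ) + d + 2)) * q1 + (-((d : ℚ) + 1)) * q2
    have c3 : (Nat.choose (k + d + 2) (k + 1) : ℚ)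
        = (Nat.choose (k + d) k : ℚ) * (((k : ℚ) + d + 1) * ((k : ℚ) + d + 2))
            / (((d : ℚ) + 1) * ((k : ℚ) + 1)) := by
      rw [eq_div_iff (by positivity)]
      linear_combination (-((k : ℚ) + d + 2)) * q1 + (-((d : ℚ) + 1)) * q3
    have c6 : (Nat.choose (2 * k + d + 4) k : ℚ)
        = (Nat.choose (2 * k + d + 2) k : ℚ)
            * ((2 * (k : ℚ) + d + 3) * (2 * (k : ℚ) + d + 4))
            / (((k : ℚ) + d + 3) * ((k : ℚ) + d + 4)) := by
      rw [eq_div_iff (by positivity)]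
      linear_combination (-(2 * (k : ℚ) + d + 4)) * q4 + (-((k : ℚ) + d + 3)) * q5
    have c5 : (Nat.choose (2 * k + d + 3) (k + 1) : ℚ)
        = (Nat.choose (2 * k + d + 2) k : ℚ) * (2 * (k : ℚ) + d + 3) / ((k : ℚ) + 1) := by
      rw [eq_div_iff (by positivity)]
      linear_combination -q6
    simp only [Fq, Gq]
    rw [show k + d + 2 + 2 + k = 2 * k + d + 4 from by ring,
        show k + d + 2 + k = 2 * k + d + 2 from by ring,
        show k + d + 2 + (k + 1) = 2 * k + d + 3 from by ring]
    rw [c2, c3, c5, c6]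
    push_cast
    field_simp
    ring

/-- The scaled alternating sum. -/
def Aq (m : ℕ) : ℚ := ∑ k ∈ range (m + 1), Fq m k

lemma Fq_eq_zero_of_lt {m k : ℕ} (h : m < k) : Fq m k = 0 := by
  simp [Fq, Nat.choose_eq_zero_of_lt h]

lemma rec_Aq (m : ℕ) : ((m : ℚ) + 4) * Aq (m + 2) + ((m : ℚ) + 1) * Aq m = 0 := by
  have hsum : ∑ k ∈ range (m + 3),
      (((m : ℚ) + 4) * Fq (m + 2) k + ((m : ℚ) + 1) * Fq m k)
      = Gq m (m + 3) - Gq m 0 := by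
    rw [← Finset.sum_range_sub (Gq m) (m + 3)]
    exact Finset.sum_congr rfl fun k _ => step m k
  have h1 : Gq m (m + 3) = 0 := by
    simp [Gq, Nat.choose_eq_zero_of_lt (show m + 2 < m + 3 by omega)]
  have h0 : Gq m 0 = 0 := by simp [Gq]
  have h2 : ∑ k ∈ range (m + 3), Fq m k = Aq m := by
    rw [show m + 3 = (m + 1) + 2 from rfl]
    rw [Finset.sum_range_succ, Finset.sum_range_succ,
      Fq_eq_zero_of_lt (show m < m + 1 by omega),
      Fq_eq_zero_of_lt (show m < m + 2 by omega)]
    simp [Aq]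
  have h3 : ∑ k ∈ range (m + 3), Fq (m + 2) k = Aq (m + 2) := rfl
  rw [Finset.sum_add_distrib, ← Finset.mul_sum, ← Finset.mul_sum, h2, h3, h1, h0] at hsum
  linarith [hsum]

lemma dfac_odd (j : ℕ) :
    Nat.doubleFactorial (2 * j + 1) = (2 * j + 1) * Nat.doubleFactorial (2 * j - 1) := by
  cases j with
  | zero => simp [Nat.doubleFactorial]
  | succ i =>
    rw [show 2 * (i + 1) + 1 = (2 * i + 1) + 2 from by ring,
        show 2 * (i + 1) - 1 = 2 * i + 1 from by omega]
    simp [Nat.doubleFactorial]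

lemma key (j : ℕ) :
    ((Nat.factorial (2 * j + 2) : ℚ)) * Aq (2 * j)
      = (-1) ^ j * (2 * (j : ℚ) + 1) * ((Nat.doubleFactorial (2 * j - 1) : ℚ)) ^ 2 := by
  induction j with
  | zero =>
    norm_num [Aq, Fq, Nat.factorial, Nat.doubleFactorial]
  | succ i ih =>
    have hrec := rec_Aq (2 * i)
    push_cast at hrec
    have hdf : (Nat.doubleFactorial (2 * i + 1) : ℚ)
        = (2 * (i : ℚ) + 1) * (Nat.doubleFactorial (2 * i - 1) : ℚ) := by
      exact_mod_cast dfac_odd i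
    have hfac : (Nat.factorial (2 * i + 4) : ℚ)
        = (2 * (i : ℚ) + 4) * (2 * (i : ℚ) + 3) * (Nat.factorial (2 * i + 2) : ℚ) := by
      rw [show 2 * i + 4 = (2 * i + 3) + 1 from by ring, Nat.factorial_succ,
        show 2 * i + 3 = (2 * i + 2) + 1 from rfl, Nat.factorial_succ]
      push_cast
      ring
    rw [show 2 * (i + 1) + 2 = 2 * i + 4 from by ring,
        show 2 * (i + 1) = 2 * i + 2 from by ring,
        show 2 * i + 2 - 1 = 2 * i + 1 from by omega, hfac, hdf]
    push_cast
    linear_combination ((2 * (i : ℚ) + 3) * (Nat.factorial (2 * i + 2) : ℚ)) * hrec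
      + (-((2 * (i : ℚ) + 3) * (2 * (i : ℚ) + 1))) * ih


/-- Euler characteristic of the real moduli space of stable `n`-pointed genus-zero
curves, odd case: for odd `n ≥ 3`,
`∑_{k=0}^{n-3} (-1)^(n-3-k) ((n-1)!/2^(k+1)) (1/(k+1)) C(n-3,k) C(n-1+k,k)
  = (-1)^((n-3)/2) (n-2) ((n-4)!!)^2`. -/
theorem euler_char_moduli_odd (n : ℕ) (hn : 3 ≤ n) (hodd : Odd n) :
    ∑ k ∈ Finset.range (n - 2),
        ((-1 : ℚ) ^ (n - 3 - k) * ((Nat.factorial (n - 1) : ℚ) / 2 ^ (k + 1)) *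
          (1 / (k + 1)) * (Nat.choose (n - 3) k : ℚ) * (Nat.choose (n - 1 + k) k : ℚ)) =
      (-1 : ℚ) ^ ((n - 3) / 2) * ((n : ℚ) - 2) * ((Nat.doubleFactorial (n - 4) : ℚ)) ^ 2 := by
  obtain ⟨j, rfl⟩ : ∃ j, n = 2 * j + 3 := by
    obtain ⟨l, hl⟩ := hodd
    exact ⟨l - 1, by omega⟩
  have hLHS : ∑ k ∈ Finset.range (2 * j + 3 - 2),
        ((-1 : ℚ) ^ (2 * j + 3 - 3 - k) * ((Nat.factorial (2 * j + 3 - 1) : ℚ) / 2 ^ (k + 1)) *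
          (1 / (k + 1)) * (Nat.choose (2 * j + 3 - 3) k : ℚ)
            * (Nat.choose (2 * j + 3 - 1 + k) k : ℚ))
      = (Nat.factorial (2 * j + 2) : ℚ) * Aq (2 * j) := by
    rw [show 2 * j + 3 - 2 = 2 * j + 1 from by omega, Aq, Finset.mul_sum]
    refine Finset.sum_congr rfl fun k hk => ?_
    have hk' : k ≤ 2 * j := by
      have := Finset.mem_range.mp hk; omega
    have hsgn : (-1 : ℚ) ^ (2 * j - k) = (-1) ^ k := by
      rcases Nat.even_or_odd k with he | ho
      · obtain ⟨r, rfl⟩ := he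
        rw [Even.neg_one_pow ⟨j - r, by omega⟩, Even.neg_one_pow ⟨r, rfl⟩]
      · obtain ⟨r, rfl⟩ := ho
        rw [Odd.neg_one_pow ⟨j - r - 1, by omega⟩, Odd.neg_one_pow ⟨r, rfl⟩]
    rw [show 2 * j + 3 - 3 = 2 * j from by omega,
        show 2 * j + 3 - 1 = 2 * j + 2 from by omega, hsgn]
    simp only [Fq]
    rw [show 2 * j + 2 + k = 2 * j + 2 + k from rfl]
    field_simp
  rw [hLHS, key j]
  rw [show 2 * j + 3 - 3 = 2 * j from by omega, show 2 * j + 3 - 4 = 2 * j - 1 from by omega,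
      Nat.mul_div_cancel_left j (by norm_num)]
  push_cast
  ring
end

section
/- For even n ≥ 4, the alternating sum over k from 0 to n-3 of (-1)^(n-3-k) * ((n-1)!/2^(k+1)) * (1/(k+1)) * C(n-3,k) * C(n-1+k,k) equals 0. -/
open Finset

private lemma ecme_lem1 (M : ℕ) :
    ∑ d ∈ range (M + 1), (Nat.choose M d : ℚ) * (-1) ^ d * (1 / 2) ^ d = (1 / 2) ^ M := by
  have h := add_pow (-(1:ℚ)/2) 1 M
  have h2 : ((-(1:ℚ)/2) + 1) ^ M = (1/2 : ℚ) ^ M := by norm_num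
  rw [h2] at h
  rw [h]
  apply Finset.sum_congr rfl
  intro d _
  rw [one_pow, mul_one, show (-(1:ℚ)/2) = (-1) * (1/2) by norm_num, mul_pow]
  ring

private lemma ecme_lem2 (N b : ℕ) (hb1 : 1 ≤ b) (hbN : b ≤ N) :
    ∑ k ∈ range N, (-1 : ℚ) ^ (N - 1 - k) * (Nat.choose N (k+1) : ℚ) *
        (Nat.choose (k+1) b : ℚ) * (1 / 2) ^ k
      = (-1) ^ (N - b) * (Nat.choose N b : ℚ) * (1 / 2) ^ (N - 1) := by
  have ha : ∑ k ∈ range N, (-1 : ℚ) ^ (N - 1 - k) * (Nat.choose N (k+1) : ℚ) *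
        (Nat.choose (k+1) b : ℚ) * (1 / 2) ^ k
      = ∑ j ∈ range (N + 1), ((-1 : ℚ) ^ (N - j) * (Nat.choose N j : ℚ) *
        (Nat.choose j b : ℚ) * (1 / 2) ^ j) * 2 := by
    rw [Finset.sum_range_succ' (fun j => ((-1 : ℚ) ^ (N - j) * (Nat.choose N j : ℚ) *
        (Nat.choose j b : ℚ) * (1 / 2) ^ j) * 2) N]
    rw [Nat.choose_eq_zero_of_lt hb1]
    push_cast
    rw [mul_zero, zero_mul, zero_mul, add_zero]
    apply Finset.sum_congr rfl
    intro k hk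
    have : N - (k + 1) = N - 1 - k := by omega
    rw [this]
    ring
  rw [ha]
  have hbsub : Finset.Ico b (N+1) ⊆ range (N+1) := by
    intro x hx; simp only [Finset.mem_Ico] at hx; simp [hx.2]
  have hbz : ∑ j ∈ range (N + 1), ((-1 : ℚ) ^ (N - j) * (Nat.choose N j : ℚ) *
        (Nat.choose j b : ℚ) * (1 / 2) ^ j) * 2
      = ∑ j ∈ Finset.Ico b (N+1), ((-1 : ℚ) ^ (N - j) * (Nat.choose N j : ℚ) *
        (Nat.choose j b : ℚ) * (1 / 2) ^ j) * 2 := by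
    symm
    apply Finset.sum_subset hbsub
    intro x hx hnx
    have : x < b := by
      simp only [Finset.mem_range] at hx
      simp only [Finset.mem_Ico, not_and, not_le] at hnx
      omega
    rw [Nat.choose_eq_zero_of_lt this]
    push_cast; ring
  rw [hbz]
  rw [Finset.sum_Ico_eq_sum_range]
  have hc : ∀ i ∈ range (N + 1 - b),
      ((-1 : ℚ) ^ (N - (b + i)) * (Nat.choose N (b + i) : ℚ) *
        (Nat.choose (b + i) b : ℚ) * (1 / 2) ^ (b + i)) * 2
      = ((-1 : ℚ) ^ (N - b) * (Nat.choose N b : ℚ) * (1/2) ^ b * 2) *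
          ((Nat.choose (N - b) i : ℚ) * (-1) ^ i * (1 / 2) ^ i) := by
    intro i hi
    simp only [Finset.mem_range] at hi
    have hiNb : i ≤ N - b := by omega
    have hbiN : b + i ≤ N := by omega
    have hcm : Nat.choose N (b + i) * Nat.choose (b + i) b
        = Nat.choose N b * Nat.choose (N - b) i := by
      have := Nat.choose_mul (n := N) (Nat.le_add_right b i)
      simpa [Nat.add_sub_cancel_left] using this
    have hcmq : (Nat.choose N (b + i) : ℚ) * (Nat.choose (b + i) b : ℚ)
        = (Nat.choose N b : ℚ) * (Nat.choose (N - b) i : ℚ) := by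
      exact_mod_cast hcm
    have hsign : (-1 : ℚ) ^ (N - (b + i)) = (-1) ^ (N - b) * (-1) ^ i := by
      have h1 : N - b - i + i = N - b := by omega
      have h2 : N - (b + i) = N - b - i := by omega
      calc (-1 : ℚ) ^ (N - (b + i)) = (-1) ^ (N - b - i) := by rw [h2]
        _ = (-1) ^ (N - b - i) * ((-1) ^ i * (-1) ^ i) := by
              rw [← pow_add]
              have : (-1 : ℚ) ^ (i + i) = ((-1 : ℚ) ^ 2) ^ i := by
                rw [← pow_mul]; ring_nf
              rw [this]; norm_num
        _ = (-1) ^ (N - b) * (-1) ^ i := by rw [← mul_assoc, ← pow_add, h1]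
    rw [hsign, pow_add]
    linear_combination ((-1:ℚ) ^ (N - b) * (-1) ^ i * (1/2) ^ b * (1/2) ^ i * 2) * hcmq
  rw [Finset.sum_congr rfl hc, ← Finset.mul_sum]
  have : N + 1 - b = (N - b) + 1 := by omega
  rw [this, ecme_lem1 (N - b)]
  have hhalf : (1/2 : ℚ) ^ b * 2 * (1/2) ^ (N - b) = (1/2) ^ (N - 1) * 2 ^ 0 := by
    rw [pow_zero, mul_one]
    have h1 : b + (N - b) = N := by omega
    calc (1/2 : ℚ) ^ b * 2 * (1/2) ^ (N - b)
        = (1/2) ^ (b + (N - b)) * 2 := by rw [pow_add]; ring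
      _ = (1/2) ^ N * 2 := by rw [h1]
      _ = (1/2) ^ (N-1) := by
            have h3 : (1/2 : ℚ) ^ N = (1/2) ^ (N-1) * (1/2) := by
              rw [← pow_succ, Nat.sub_add_cancel (by omega : 1 ≤ N)]
            rw [h3]; ring
  calc (-1 : ℚ) ^ (N - b) * ↑(Nat.choose N b) * (1/2) ^ b * 2 * (1/2) ^ (N - b)
      = (-1) ^ (N - b) * ↑(Nat.choose N b) * ((1/2) ^ b * 2 * (1/2) ^ (N - b)) := by ring
    _ = (-1) ^ (N - b) * ↑(Nat.choose N b) * (1/2) ^ (N - 1) := by rw [hhalf]; ring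

private lemma ecme_lem3 (N : ℕ) (hN : Even N) :
    ∑ ij ∈ Finset.HasAntidiagonal.antidiagonal (N + 1),
      (Nat.choose N ij.1 : ℚ) * (Nat.choose N ij.2 : ℚ) * (-1) ^ ij.2 = 0 := by
  rw [Finset.Nat.sum_antidiagonal_eq_sum_range_succ_mk]
  set f : ℕ → ℚ := fun k =>
    (Nat.choose N k : ℚ) * (Nat.choose N (N + 1 - k) : ℚ) * (-1) ^ (N + 1 - k) with hf
  have key : ∀ j ∈ range (N + 2), f (N + 1 - j) = - f j := by
    intro j hj
    simp only [Finset.mem_range] at hj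
    have hsub : N + 1 - (N + 1 - j) = j := by omega
    have hodd : Odd (N + 1) := Even.add_one hN
    have hx : (-1 : ℚ) ^ j * (-1) ^ (N + 1 - j) = -1 := by
      rw [← pow_add, show j + (N + 1 - j) = N + 1 by omega]
      exact Odd.neg_one_pow hodd
    have hsq : (-1 : ℚ) ^ j * (-1) ^ j = 1 := by
      rw [← pow_add]
      exact Even.neg_one_pow ⟨j, by omega⟩
    have hneg : (-1 : ℚ) ^ (N + 1 - j) = -(-1) ^ j := by
      linear_combination ((-1 : ℚ) ^ j) * hx - ((-1 : ℚ) ^ (N + 1 - j)) * hsq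
    simp only [hf, hsub]
    linear_combination ((Nat.choose N j : ℚ) * (Nat.choose N (N + 1 - j) : ℚ)) * hneg
  have hrefl := Finset.sum_range_reflect f (N + 2)
  have h1 : ∀ j ∈ range (N + 2), f (N + 2 - 1 - j) = - f j := by
    intro j hj
    rw [show N + 2 - 1 - j = N + 1 - j by omega]
    exact key j hj
  rw [Finset.sum_congr rfl h1, Finset.sum_neg_distrib] at hrefl
  linarith [hrefl]

private lemma ecme_core (N : ℕ) (hN2 : 2 ≤ N) (hNe : Even N) :
    ∑ k ∈ range N, (-1 : ℚ) ^ (N - 1 - k) * (Nat.choose N (k+1) : ℚ) *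
        (Nat.choose (N+1+k) (N+1) : ℚ) * (1 / 2) ^ k = 0 := by
  have hexp : ∀ k ∈ range N,
      (-1 : ℚ) ^ (N - 1 - k) * (Nat.choose N (k+1) : ℚ) *
        (Nat.choose (N+1+k) (N+1) : ℚ) * (1 / 2) ^ k
      = ∑ ij ∈ Finset.HasAntidiagonal.antidiagonal (N + 1),
          (Nat.choose N ij.1 : ℚ) * ((-1 : ℚ) ^ (N - 1 - k) * (Nat.choose N (k+1) : ℚ) *
            (Nat.choose (k+1) ij.2 : ℚ) * (1 / 2) ^ k) := by
    intro k _
    have hv : (Nat.choose (N+1+k) (N+1) : ℚ) = ∑ ij ∈ Finset.HasAntidiagonal.antidiagonal (N + 1),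
        (Nat.choose N ij.1 : ℚ) * (Nat.choose (k+1) ij.2 : ℚ) := by
      rw [show N+1+k = N + (k+1) by omega, Nat.add_choose_eq N (k+1) (N+1)]
      push_cast
      rfl
    calc (-1 : ℚ) ^ (N - 1 - k) * (Nat.choose N (k+1) : ℚ) *
          (Nat.choose (N+1+k) (N+1) : ℚ) * (1 / 2) ^ k
        = ((-1 : ℚ) ^ (N - 1 - k) * (Nat.choose N (k+1) : ℚ) * (1 / 2) ^ k) *
            (Nat.choose (N+1+k) (N+1) : ℚ) := by ring
      _ = ((-1 : ℚ) ^ (N - 1 - k) * (Nat.choose N (k+1) : ℚ) * (1 / 2) ^ k) *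
            ∑ ij ∈ Finset.HasAntidiagonal.antidiagonal (N + 1),
              (Nat.choose N ij.1 : ℚ) * (Nat.choose (k+1) ij.2 : ℚ) := by rw [hv]
      _ = _ := by
            rw [Finset.mul_sum]
            apply Finset.sum_congr rfl
            intro ij _
            ring
  rw [Finset.sum_congr rfl hexp, Finset.sum_comm]
  have hper : ∀ ij ∈ Finset.HasAntidiagonal.antidiagonal (N + 1),
      ∑ k ∈ range N, (Nat.choose N ij.1 : ℚ) * ((-1 : ℚ) ^ (N - 1 - k) *
          (Nat.choose N (k+1) : ℚ) * (Nat.choose (k+1) ij.2 : ℚ) * (1 / 2) ^ k)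
      = ((Nat.choose N ij.1 : ℚ) * (Nat.choose N ij.2 : ℚ) * (-1) ^ ij.2) * (1/2) ^ (N-1) := by
    intro ij hij
    obtain ⟨a, b⟩ := ij
    simp only [Finset.HasAntidiagonal.mem_antidiagonal] at hij
    simp only
    rw [← Finset.mul_sum]
    by_cases hb0 : b = 0
    · subst hb0
      have ha' : a = N + 1 := by omega
      subst ha'
      rw [Nat.choose_eq_zero_of_lt (by omega : N < N + 1)]
      push_cast
      ring
    · by_cases hbN : b ≤ N
      · rw [ecme_lem2 N b (by omega) hbN]
        have hsgn : (-1 : ℚ) ^ (N - b) = (-1) ^ b := by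
          have hx : (-1 : ℚ) ^ (N - b) * (-1) ^ b = 1 := by
            rw [← pow_add, show N - b + b = N by omega]
            exact Even.neg_one_pow hNe
          have hsq : (-1 : ℚ) ^ b * (-1) ^ b = 1 := by
            rw [← pow_add]; exact Even.neg_one_pow ⟨b, by omega⟩
          linear_combination ((-1 : ℚ) ^ b) * hx - ((-1 : ℚ) ^ (N - b)) * hsq
        rw [hsgn]; ring
      · -- b ≥ N + 1, so b = N + 1, a = 0; all C(k+1,b) = 0 and C(N,b) = 0
        have hb' : b = N + 1 := by omega
        subst hb'
        have hz : ∀ k ∈ range N, (-1 : ℚ) ^ (N - 1 - k) *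
            (Nat.choose N (k+1) : ℚ) * (Nat.choose (k+1) (N+1) : ℚ) * (1 / 2) ^ k = 0 := by
          intro k hk
          simp only [Finset.mem_range] at hk
          rw [Nat.choose_eq_zero_of_lt (by omega : k + 1 < N + 1)]
          push_cast; ring
        rw [Finset.sum_congr rfl hz, Finset.sum_const, smul_zero,
          Nat.choose_eq_zero_of_lt (by omega : N < N + 1)]
        push_cast; ring
  rw [Finset.sum_congr rfl hper, ← Finset.sum_mul, ecme_lem3 N hNe, zero_mul]

/-- Euler characteristic of the real moduli space of stable `n`-pointed genus-zero
curves, even case: for even `n ≥ 4`,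
`∑_{k=0}^{n-3} (-1)^(n-3-k) ((n-1)!/2^(k+1)) (1/(k+1)) C(n-3,k) C(n-1+k,k) = 0`. -/
theorem euler_char_moduli_even (n : ℕ) (hn : 4 ≤ n) (heven : Even n) :
    ∑ k ∈ Finset.range (n - 2),
        ((-1 : ℚ) ^ (n - 3 - k) * ((Nat.factorial (n - 1) : ℚ) / 2 ^ (k + 1)) *
          (1 / (k + 1)) * (Nat.choose (n - 3) k : ℚ) * (Nat.choose (n - 1 + k) k : ℚ)) =
      0 := by
  obtain ⟨N, rfl⟩ : ∃ N, n = N + 2 := ⟨n - 2, by omega⟩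
  have hN2 : 2 ≤ N := by omega
  have hNe : Even N := by
    rcases heven with ⟨t, ht⟩
    exact ⟨t - 1, by omega⟩
  simp only [show N + 2 - 2 = N by omega, show N + 2 - 3 = N - 1 by omega,
    show N + 2 - 1 = N + 1 by omega]
  have hterm : ∀ k ∈ range N,
      (-1 : ℚ) ^ (N - 1 - k) * ((Nat.factorial (N + 1) : ℚ) / 2 ^ (k + 1)) *
          (1 / (k + 1)) * (Nat.choose (N - 1) k : ℚ) * (Nat.choose (N + 1 + k) k : ℚ)
      = ((Nat.factorial (N + 1) : ℚ) / (2 * N)) *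
          ((-1 : ℚ) ^ (N - 1 - k) * (Nat.choose N (k+1) : ℚ) *
            (Nat.choose (N+1+k) (N+1) : ℚ) * (1 / 2) ^ k) := by
    intro k _
    have hNC : (N : ℚ) * (Nat.choose (N - 1) k : ℚ)
        = (Nat.choose N (k+1) : ℚ) * (k + 1) := by
      have h := Nat.add_one_mul_choose_eq (N - 1) k
      rw [show N - 1 + 1 = N by omega] at h
      exact_mod_cast h
    have hsymm : (Nat.choose (N + 1 + k) k : ℚ) = (Nat.choose (N + 1 + k) (N + 1) : ℚ) := by
      have h := Nat.choose_symm (by omega : k ≤ N + 1 + k)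
      rw [show N + 1 + k - k = N + 1 by omega] at h
      exact_mod_cast h.symm
    rw [hsymm]
    have hk1 : ((k : ℚ) + 1) ≠ 0 := by positivity
    have hNne : (N : ℚ) ≠ 0 := by
      exact_mod_cast (by omega : N ≠ 0)
    have hC1 : (Nat.choose (N - 1) k : ℚ) = (Nat.choose N (k+1) : ℚ) * (k + 1) / N := by
      rw [eq_div_iff hNne]
      linear_combination hNC
    rw [hC1]
    field_simp
    have h2 : (1/2 : ℚ) ^ k * 2 ^ k = 1 := by rw [← mul_pow]; norm_num
    linear_combination (-2 * (Nat.choose N (k + 1) : ℚ) * (Nat.choose (N + 1 + k) (N + 1) : ℚ)) * h2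
  rw [Finset.sum_congr rfl hterm, ← Finset.mul_sum, ecme_core N hN2 hNe, mul_zero]
end
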